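/- Let Ω be a measurable space, M a topological space containing a countable dense subset, and p : M → M(Ω) a continuous map into the space of finite measures on Ω equipped with the total variation norm. Then there exists a finite measure μ₀ on Ω such that p(ξ) is absolutely continuous with respect to μ₀ for every ξ ∈ M. -/

import Mathlib

/-!
The countably many measures `p ξₙ`, `(ξₙ)` dense in `M`, are dominated by one finite measure `μ₀`
(a finite measure equivalent to their sum). For a fixed `μ₀`, the set of `ξ` with `p ξ ≪ μ₀` is
closed: a set that is `p ξₙ`-null for `ξₙ → ξ` has `p ξ`-measure at most the total variation of
`p ξₙ - p ξ`, which tends to zero. A closed set containing a dense set is everything.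
-/

open MeasureTheory Filter
open scoped ENNReal Topology

namespace MeasureTheory

variable {Ω : Type*} [MeasurableSpace Ω]

theorem Measure.exists_isFiniteMeasure_forall_absolutelyContinuous {ι : Type*} [Countable ι]
    (μ : ι → Measure Ω) [∀ i, SFinite (μ i)] :
    ∃ ν : Measure Ω, IsFiniteMeasure ν ∧ ∀ i, μ i ≪ ν :=
  ⟨(Measure.sum μ).toFinite, inferInstance, fun i ↦
    (Measure.le_sum μ i).absolutelyContinuous.trans (absolutelyContinuous_toFinite _)⟩

theorem Measure.apply_le_add_totalVariation_toSignedMeasure_sub (μ ν : Measure Ω)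
    [IsFiniteMeasure μ] [IsFiniteMeasure ν] {s : Set Ω} (hs : MeasurableSet s) :
    μ s ≤ ν s + (ν.toSignedMeasure - μ.toSignedMeasure).totalVariation Set.univ := by
  have hdiff : (ν.toSignedMeasure - μ.toSignedMeasure) s = ν.real s - μ.real s := by
    rw [_root_.sub_apply, toSignedMeasure_apply_measurable hs,
      toSignedMeasure_apply_measurable hs]
  calc μ s = ENNReal.ofReal (ν.real s + (μ.real s - ν.real s)) := by
        rw [add_sub_cancel, ofReal_measureReal]
    _ ≤ ENNReal.ofReal (ν.real s) + ENNReal.ofReal (μ.real s - ν.real s) := ENNReal.ofReal_add_le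
    _ ≤ ν s + ‖(ν.toSignedMeasure - μ.toSignedMeasure) s‖ₑ := by
        rw [ofReal_measureReal, hdiff, ← enorm_neg, neg_sub, Real.enorm_eq_ofReal_abs]
        gcongr
        exact le_abs_self _
    _ ≤ ν s + (ν.toSignedMeasure - μ.toSignedMeasure).totalVariation Set.univ := by
        gcongr
        exact (SignedMeasure.enorm_le_totalVariation _ s).trans (measure_mono (Set.subset_univ s))

theorem isClosed_setOf_absolutelyContinuous {M : Type*} [TopologicalSpace M]
    (p : M → Measure Ω) [∀ ξ, IsFiniteMeasure (p ξ)]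
    (hcont : ∀ ξ₀ : M, ∀ ε : ℝ≥0∞, 0 < ε → ∀ᶠ ξ in 𝓝 ξ₀,
      ((p ξ).toSignedMeasure - (p ξ₀).toSignedMeasure).totalVariation Set.univ < ε)
    (ν : Measure Ω) :
    IsClosed {ξ | p ξ ≪ ν} := by
  refine isClosed_iff_frequently.2 fun ξ hξ ↦ Measure.AbsolutelyContinuous.mk fun t ht hνt ↦ ?_
  by_contra hpos
  obtain ⟨η, hclose, hη⟩ :=
    ((hcont ξ (p ξ t) (pos_iff_ne_zero.2 hpos)).and_frequently hξ).exists
  have := (p ξ).apply_le_add_totalVariation_toSignedMeasure_sub (p η) ht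
  rw [hη hνt, zero_add] at this
  exact (this.trans_lt hclose).false

end MeasureTheory

/-- If `M` is separable and `p : M → M(Ω)` is continuous with respect to the total
variation norm, then there is a finite measure `μ₀` dominating all `p ξ`. -/
theorem stmt_1 {Ω M : Type*} [MeasurableSpace Ω] [TopologicalSpace M]
    [TopologicalSpace.SeparableSpace M]
    (p : M → Measure Ω) (hfin : ∀ ξ, IsFiniteMeasure (p ξ))
    (hcont : ∀ ξ₀ : M, ∀ ε : ℝ≥0∞, 0 < ε →
      ∀ᶠ ξ in 𝓝 ξ₀,
        (@Measure.toSignedMeasure Ω _ (p ξ) (hfin ξ) -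
          @Measure.toSignedMeasure Ω _ (p ξ₀) (hfin ξ₀)).totalVariation Set.univ < ε) :
    ∃ μ₀ : Measure Ω, IsFiniteMeasure μ₀ ∧ ∀ ξ : M, p ξ ≪ μ₀ := by
  obtain ⟨D, hD_countable, hD_dense⟩ := TopologicalSpace.exists_countable_dense M
  have := hD_countable.to_subtype
  obtain ⟨μ₀, hμ₀, hD⟩ :=
    Measure.exists_isFiniteMeasure_forall_absolutelyContinuous fun ξ : D ↦ p ξ
  exact ⟨μ₀, hμ₀, fun ξ ↦ hD_dense.denseRange_val.induction_on ξ
    (isClosed_setOf_absolutelyContinuous p hcont μ₀) hD⟩
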